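/- arXiv:1511.01163 — 5 statements merged into one kernel-verified Lean document; each statement's English description precedes it below -/
import Mathlib

section
/- Let Z ≥ 0 be a bounded, not almost-surely-zero random variable and let p be a polynomial. Then lim_{n→∞} E[p(Z) Z^n] / E[Z^n] = p(‖Z‖_∞), where ‖Z‖_∞ is the essential supremum of Z. -/
/-!
Let `c = ‖Z‖_∞ > 0`. Below any level `a < c` the weight `Z ^ n` is at most `a ^ n`, whereas for
`a < b < c` the event `{b ≤ Z}` has positive mass, so `E[Z ^ n] ≳ b ^ n`. Hence the probability
measures `Z ^ n dμ / E[Z ^ n]` put a geometrically vanishing mass `O((a / b) ^ n)` on `{Z < a}`,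
i.e. they concentrate at `c`, and the average of any continuous `f(Z)` against them tends to `f(c)`.
-/

open MeasureTheory Filter Topology Set

lemma abs_mul_pow_le_of_abs_le {y x a B η : ℝ} (n : ℕ) (hx : 0 ≤ x) (ha : 0 ≤ a) (hη : 0 ≤ η)
    (hyB : |y| ≤ B) (hyη : a ≤ x → |y| ≤ η) : |y * x ^ n| ≤ B * a ^ n + η * x ^ n := by
  have hB : 0 ≤ B := (abs_nonneg y).trans hyB
  rw [abs_mul, abs_of_nonneg (pow_nonneg hx n)]
  rcases le_or_gt a x with hax | hxa
  · have := mul_le_mul_of_nonneg_right (hyη hax) (pow_nonneg hx n)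
    nlinarith [pow_nonneg ha n]
  · calc |y| * x ^ n ≤ B * a ^ n :=
          mul_le_mul hyB (pow_le_pow_left₀ hx hxa.le n) (pow_nonneg hx n) hB
      _ ≤ B * a ^ n + η * x ^ n := le_add_of_nonneg_right (by positivity)

namespace MeasureTheory

variable {Ω : Type*} [MeasurableSpace Ω] {μ : Measure Ω} {Z : Ω → ℝ}

lemma essSup_pos_of_measure_pos (hbdd : IsBoundedUnder (· ≤ ·) (ae μ) Z)
    (hpos : 0 < μ {ω | 0 < Z ω}) : 0 < essSup Z μ := by
  by_contra! h
  have hle : ∀ᵐ ω ∂μ, Z ω ≤ 0 := (ae_le_essSup hbdd).mono fun ω hω => hω.trans h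
  simp only [ae_iff, not_le] at hle
  exact hpos.ne' hle

lemma measure_le_pos_of_lt_essSup [NeZero μ] (hZ0 : ∀ᵐ ω ∂μ, 0 ≤ Z ω) {b : ℝ}
    (hb : b < essSup Z μ) : 0 < μ {ω | b ≤ Z ω} := by
  refine pos_iff_ne_zero.2 fun h => hb.not_ge ?_
  have hlt : ∀ᵐ ω ∂μ, Z ω ≤ b := by
    simp only [ae_iff, not_le]
    exact measure_mono_null (fun ω (hω : b < Z ω) => hω.le) h
  exact essSup_le_of_ae_le b hlt (IsBoundedUnder.isCoboundedUnder_le ⟨0, hZ0⟩)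

lemma integrable_comp_of_ae_mem_Icc [IsFiniteMeasure μ] (hZm : AEMeasurable Z μ) {h : ℝ → ℝ}
    (hh : Continuous h) {a b : ℝ} (hZ : ∀ᵐ ω ∂μ, Z ω ∈ Icc a b) :
    Integrable (fun ω => h (Z ω)) μ := by
  obtain ⟨C, hC⟩ := isCompact_Icc.exists_bound_of_continuousOn hh.continuousOn
  exact .of_bound (hh.comp_aestronglyMeasurable hZm.aestronglyMeasurable) C
    (hZ.mono fun ω hω => hC _ hω)

lemma pow_mul_measureReal_le_integral_pow [IsFiniteMeasure μ] (hZ0 : ∀ᵐ ω ∂μ, 0 ≤ Z ω) {n : ℕ}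
    (hint : Integrable (fun ω => Z ω ^ n) μ) {b : ℝ} (hb : 0 ≤ b) :
    b ^ n * μ.real {ω | b ≤ Z ω} ≤ ∫ ω, Z ω ^ n ∂μ :=
  calc b ^ n * μ.real {ω | b ≤ Z ω} ≤ b ^ n * μ.real {ω | b ^ n ≤ Z ω ^ n} :=
        mul_le_mul_of_nonneg_left
          (measureReal_mono fun ω (hω : b ≤ Z ω) => pow_le_pow_left₀ hb hω n) (pow_nonneg hb n)
    _ ≤ ∫ ω, Z ω ^ n ∂μ :=
        mul_meas_ge_le_integral_of_nonneg (hZ0.mono fun ω hω => pow_nonneg hω n) hint _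

variable [IsFiniteMeasure μ]

lemma abs_integral_mul_pow_le (hZm : AEMeasurable Z μ) {c : ℝ} (hZ : ∀ᵐ ω ∂μ, Z ω ∈ Icc 0 c)
    {g : ℝ → ℝ} (hg : Continuous g) {a B η : ℝ} (ha : 0 ≤ a) (hη : 0 ≤ η)
    (hgB : ∀ x ∈ Icc 0 c, |g x| ≤ B) (hgη : ∀ x ∈ Icc a c, |g x| ≤ η) (n : ℕ) :
    |∫ ω, g (Z ω) * Z ω ^ n ∂μ| ≤ B * a ^ n * μ.real univ + η * ∫ ω, Z ω ^ n ∂μ := by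
  have hpow : Integrable (fun ω => Z ω ^ n) μ :=
    integrable_comp_of_ae_mem_Icc hZm (continuous_pow n) hZ
  have hbound : Integrable (fun ω => B * a ^ n + η * Z ω ^ n) μ :=
    (integrable_const _).add (hpow.const_mul η)
  calc |∫ ω, g (Z ω) * Z ω ^ n ∂μ| ≤ ∫ ω, |g (Z ω) * Z ω ^ n| ∂μ := abs_integral_le_integral_abs
    _ ≤ ∫ ω, (B * a ^ n + η * Z ω ^ n) ∂μ := by
        refine integral_mono_ae
          (integrable_comp_of_ae_mem_Icc hZm (h := fun x => g x * x ^ n) (by fun_prop) hZ).abs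
          hbound (hZ.mono fun ω hω => ?_)
        exact abs_mul_pow_le_of_abs_le n hω.1 ha hη (hgB _ hω) fun h => hgη _ ⟨h, hω.2⟩
    _ = B * a ^ n * μ.real univ + η * ∫ ω, Z ω ^ n ∂μ := by
        rw [integral_add (integrable_const _) (hpow.const_mul η), integral_const,
          integral_const_mul, smul_eq_mul, mul_comm (μ.real univ)]

lemma eventually_abs_integral_mul_pow_div_lt [NeZero μ] (hZm : AEMeasurable Z μ)
    (hZ : ∀ᵐ ω ∂μ, Z ω ∈ Icc 0 (essSup Z μ)) {g : ℝ → ℝ} (hg : Continuous g) {a η η' : ℝ}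
    (ha : 0 ≤ a) (hac : a < essSup Z μ) (hgη : ∀ x ∈ Icc a (essSup Z μ), |g x| ≤ η)
    (hηη' : η < η') :
    ∀ᶠ n in atTop, |(∫ ω, g (Z ω) * Z ω ^ n ∂μ) / ∫ ω, Z ω ^ n ∂μ| < η' := by
  set c := essSup Z μ
  obtain ⟨b, hab, hbc⟩ := exists_between hac
  have hb : 0 < b := ha.trans_lt hab
  have hη : 0 ≤ η := (abs_nonneg _).trans (hgη c ⟨hac.le, le_rfl⟩)
  have hm : 0 < μ.real {ω | b ≤ Z ω} :=
    ENNReal.toReal_pos (measure_le_pos_of_lt_essSup (hZ.mono fun _ h => h.1) hbc).ne'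
      (measure_ne_top _ _)
  obtain ⟨B, hgB⟩ := isCompact_Icc.exists_bound_of_continuousOn (s := Icc 0 c) hg.continuousOn
  have hB : 0 ≤ B := (norm_nonneg _).trans (hgB c ⟨ha.trans hac.le, le_rfl⟩)
  set C := B * μ.real univ / μ.real {ω | b ≤ Z ω}
  have hgeom : Tendsto (fun n : ℕ => C * (a / b) ^ n) atTop (𝓝 0) := by
    simpa using (tendsto_pow_atTop_nhds_zero_of_lt_one (by positivity)
      ((div_lt_one hb).2 hab)).const_mul C
  filter_upwards [hgeom.eventually (gt_mem_nhds (sub_pos.2 hηη'))] with n hn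
  have hpow : Integrable (fun ω => Z ω ^ n) μ :=
    integrable_comp_of_ae_mem_Icc hZm (continuous_pow n) hZ
  have hlow := pow_mul_measureReal_le_integral_pow (hZ.mono fun _ h => h.1) hpow hb.le
  have hI : 0 < ∫ ω, Z ω ^ n ∂μ := (by positivity : 0 < b ^ n * _).trans_le hlow
  rw [abs_div, abs_of_pos hI, div_lt_iff₀ hI]
  calc |∫ ω, g (Z ω) * Z ω ^ n ∂μ|
      ≤ B * a ^ n * μ.real univ + η * ∫ ω, Z ω ^ n ∂μ :=
        abs_integral_mul_pow_le hZm hZ hg ha hη hgB hgη n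
    _ = C * (a / b) ^ n * (b ^ n * μ.real {ω | b ≤ Z ω}) + η * ∫ ω, Z ω ^ n ∂μ := by
        simp only [C, div_pow]
        field_simp
    _ ≤ C * (a / b) ^ n * ∫ ω, Z ω ^ n ∂μ + η * ∫ ω, Z ω ^ n ∂μ := by gcongr
    _ < η' * ∫ ω, Z ω ^ n ∂μ := by nlinarith

lemma integral_pow_pos [NeZero μ] (hZm : AEMeasurable Z μ)
    (hZ : ∀ᵐ ω ∂μ, Z ω ∈ Icc 0 (essSup Z μ)) (hc : 0 < essSup Z μ) (n : ℕ) :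
    0 < ∫ ω, Z ω ^ n ∂μ := by
  have hm : 0 < μ.real {ω | essSup Z μ / 2 ≤ Z ω} :=
    ENNReal.toReal_pos (measure_le_pos_of_lt_essSup (hZ.mono fun _ h => h.1)
      (half_lt_self hc)).ne' (measure_ne_top _ _)
  exact (by positivity : 0 < (essSup Z μ / 2) ^ n * _).trans_le
    (pow_mul_measureReal_le_integral_pow (hZ.mono fun _ h => h.1)
      (integrable_comp_of_ae_mem_Icc hZm (continuous_pow n) hZ) (half_pos hc).le)

lemma tendsto_integral_mul_pow_div_integral_pow_of_apply_essSup_eq_zero [NeZero μ]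
    (hZm : AEMeasurable Z μ) (hZ : ∀ᵐ ω ∂μ, Z ω ∈ Icc 0 (essSup Z μ)) (hc : 0 < essSup Z μ)
    {g : ℝ → ℝ} (hg : Continuous g) (hgc : g (essSup Z μ) = 0) :
    Tendsto (fun n : ℕ => (∫ ω, g (Z ω) * Z ω ^ n ∂μ) / ∫ ω, Z ω ^ n ∂μ) atTop (𝓝 0) := by
  set c := essSup Z μ
  refine Metric.tendsto_nhds.2 fun ε hε => ?_
  obtain ⟨δ, hδ, hgδ⟩ := Metric.continuousAt_iff.1 hg.continuousAt (ε / 2) (half_pos hε)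
  have hgε : ∀ x ∈ Icc (max (c - δ / 2) (c / 2)) c, |g x| ≤ ε / 2 := fun x hx => by
    have hxc : dist x c < δ := by
      rw [Real.dist_eq, abs_of_nonpos (by linarith [hx.2])]
      linarith [le_max_left (c - δ / 2) (c / 2), hx.1]
    simpa [Real.dist_eq, hgc] using (hgδ hxc).le
  simpa only [Real.dist_eq, sub_zero] using eventually_abs_integral_mul_pow_div_lt hZm hZ hg
    (by positivity) (max_lt (by linarith) (half_lt_self hc)) hgε (half_lt_self hε)

theorem tendsto_integral_mul_pow_div_integral_pow (hZm : AEMeasurable Z μ)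
    (hZ0 : ∀ᵐ ω ∂μ, 0 ≤ Z ω) (hbdd : IsBoundedUnder (· ≤ ·) (ae μ) Z)
    (hpos : 0 < μ {ω | 0 < Z ω}) {f : ℝ → ℝ} (hf : Continuous f) :
    Tendsto (fun n : ℕ => (∫ ω, f (Z ω) * Z ω ^ n ∂μ) / ∫ ω, Z ω ^ n ∂μ) atTop
      (𝓝 (f (essSup Z μ))) := by
  have : NeZero μ := ⟨by rintro rfl; simp at hpos⟩
  set c := essSup Z μ
  have hc : 0 < c := essSup_pos_of_measure_pos hbdd hpos
  have hZ : ∀ᵐ ω ∂μ, Z ω ∈ Icc 0 c := hZ0.and (ae_le_essSup hbdd)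
  refine tendsto_sub_nhds_zero_iff.1 <|
    (tendsto_integral_mul_pow_div_integral_pow_of_apply_essSup_eq_zero hZm hZ hc (g := (f · - f c))
      (hf.sub continuous_const) (sub_self (f c))).congr fun n => ?_
  have hfpow : Integrable (fun ω => f (Z ω) * Z ω ^ n) μ :=
    integrable_comp_of_ae_mem_Icc hZm (h := fun x => f x * x ^ n) (by fun_prop) hZ
  have hpow : Integrable (fun ω => Z ω ^ n) μ :=
    integrable_comp_of_ae_mem_Icc hZm (continuous_pow n) hZ
  simp only [sub_mul]
  rw [integral_sub hfpow (hpow.const_mul _), integral_const_mul, sub_div,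
    mul_div_cancel_right₀ _ (integral_pow_pos hZm hZ hc n).ne']

end MeasureTheory

/-- For a bounded nonnegative random variable `Z` on a probability space,
not almost surely zero, and a polynomial `p`,
`E[p(Z) Z^n] / E[Z^n] → p(‖Z‖_∞)` as `n → ∞`, where `‖Z‖_∞ = essSup Z`. -/
theorem stmt_0 {Ω : Type*} [MeasurableSpace Ω] (μ : Measure Ω) [IsProbabilityMeasure μ]
    (Z : Ω → ℝ) (hZm : Measurable Z) (M : ℝ)
    (hZ0 : ∀ᵐ ω ∂μ, 0 ≤ Z ω) (hZM : ∀ᵐ ω ∂μ, Z ω ≤ M)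
    (hpos : 0 < μ {ω | 0 < Z ω}) (p : Polynomial ℝ) :
    Tendsto (fun n : ℕ => (∫ ω, p.eval (Z ω) * Z ω ^ n ∂μ) / ∫ ω, Z ω ^ n ∂μ)
      atTop (nhds (p.eval (essSup Z μ))) :=
  tendsto_integral_mul_pow_div_integral_pow hZm.aemeasurable hZ0 ⟨M, hZM⟩ hpos p.continuous
end

section
/- Define Λ̄(λ) = log(C + e^λ) + log((1+C)/C) if e^λ < C², Λ̄(λ) = 2 log(1 + e^{λ/2}) if C² ≤ e^λ ≤ 1/A², and Λ̄(λ) = log(1 + A e^λ) + log((1+A)/A) if e^λ > 1/A², where 0 < A, C and AC < 1. Then Λ̄ is continuous and differentiable on ℝ, and its derivative is Λ̄'(λ) = e^λ/(C + e^λ) for e^λ < C², Λ̄'(λ) = e^{λ/2}/(1 + e^{λ/2}) for C² < e^λ < 1/A², and Λ̄'(λ) = A e^λ/(1 + A e^λ) for e^λ > 1/A². -/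
/-!
Each of the three pieces of `Λ̄` is smooth on all of `ℝ`, and `Λ̄` switches pieces only at
`λ = log C²` and `λ = log (1/A²)`, which are in increasing order because `AC < 1`. At each
switch the two adjacent pieces have the same value and the same slope (at `e^{λ/2} = C` both
have value `2 log (1 + C)` and slope `C/(1+C)`, at `e^{λ/2} = 1/A` both have value
`2 log (1 + 1/A)` and slope `1/(1+A)`), so the one-sided derivatives agree and `Λ̄` is
differentiable there as well.
-/

/-- The limiting scaled cumulant generating function `Λ̄(λ)` (formula (L0-ans) in the paper). -/
noncomputable def Lbar (A C l : ℝ) : ℝ :=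
  if Real.exp l < C ^ 2 then Real.log (C + Real.exp l) + Real.log ((1 + C) / C)
  else if 1 / A ^ 2 < Real.exp l then Real.log (1 + A * Real.exp l) + Real.log ((1 + A) / A)
  else 2 * Real.log (1 + Real.exp (l / 2))

open Real Set

section Gluing

variable {α β : Type*} [LinearOrder α] {p : α → Prop} [DecidablePred p] {f g : α → β} {a : α}

theorem eqOn_ite_Iic (hlt : ∀ y < a, p y) (hfg : f a = g a) :
    EqOn (fun y ↦ if p y then f y else g y) f (Iic a) := by
  intro y hy
  rcases (mem_Iic.mp hy).lt_or_eq with hy | rfl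
  · simp only [if_pos (hlt y hy)]
  · dsimp only; split_ifs <;> simp only [hfg]

theorem eqOn_ite_Ici (hgt : ∀ y, a < y → ¬ p y) (hfg : f a = g a) :
    EqOn (fun y ↦ if p y then f y else g y) g (Ici a) := by
  intro y hy
  rcases (mem_Ici.mp hy).lt_or_eq with hy | rfl
  · simp only [if_neg (hgt y hy)]
  · dsimp only; split_ifs <;> simp only [hfg]

end Gluing

section GluingDeriv

variable {E : Type*} [NormedAddCommGroup E] [NormedSpace ℝ E] {f g F : ℝ → E} {f' : E} {a : ℝ}
  {p : ℝ → Prop} [DecidablePred p]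

theorem HasDerivAt.of_eqOn_Iic_of_eqOn_Ici (hf : HasDerivAt f f' a) (hg : HasDerivAt g f' a)
    (hFf : EqOn F f (Iic a)) (hFg : EqOn F g (Ici a)) : HasDerivAt F f' a := by
  have hleft := hf.hasDerivWithinAt.congr_of_mem hFf self_mem_Iic
  have hright := hg.hasDerivWithinAt.congr_of_mem hFg self_mem_Ici
  simpa only [Iic_union_Ici, hasDerivWithinAt_univ] using hleft.union hright

theorem hasDerivAt_ite_of_lt_of_gt {f' g' : ℝ → E} (hlt : ∀ y < a, p y)
    (hgt : ∀ y, a < y → ¬ p y) (hf : ∀ x, HasDerivAt f (f' x) x)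
    (hg : ∀ x, HasDerivAt g (g' x) x) (hfg : f a = g a) (hfg' : f' a = g' a) (x : ℝ) :
    HasDerivAt (fun y ↦ if p y then f y else g y) (if p x then f' x else g' x) x := by
  rcases lt_trichotomy x a with hx | rfl | hx
  · rw [if_pos (hlt x hx)]
    exact (hf x).congr_of_eventuallyEq
      ((eqOn_ite_Iic hlt hfg).eventuallyEq_of_mem (Iic_mem_nhds hx))
  · have hF : HasDerivAt (fun y ↦ if p y then f y else g y) (f' x) x :=
      (hf x).of_eqOn_Iic_of_eqOn_Ici (hfg' ▸ hg x) (eqOn_ite_Iic hlt hfg) (eqOn_ite_Ici hgt hfg)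
    split_ifs <;> simpa only [hfg'] using hF
  · rw [if_neg (hgt x hx)]
    exact (hg x).congr_of_eventuallyEq
      ((eqOn_ite_Ici hgt hfg).eventuallyEq_of_mem (Ici_mem_nhds hx))

end GluingDeriv

theorem exp_half_eq_of_exp_eq_sq {l c : ℝ} (hc : 0 < c) (h : exp l = c ^ 2) : exp (l / 2) = c := by
  rw [← sq_eq_sq₀ (exp_pos _).le hc.le, ← h, sq, ← exp_add, add_halves]

theorem hasDerivAt_log_const_add_exp {C : ℝ} (hC : 0 < C) (b x : ℝ) :
    HasDerivAt (fun y ↦ log (C + exp y) + b) (exp x / (C + exp x)) x :=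
  (((hasDerivAt_exp x).const_add C).log (by positivity)).add_const b

theorem hasDerivAt_log_one_add_const_mul_exp {A : ℝ} (hA : 0 < A) (b x : ℝ) :
    HasDerivAt (fun y ↦ log (1 + A * exp y) + b) (A * exp x / (1 + A * exp x)) x :=
  ((((hasDerivAt_exp x).const_mul A).const_add 1).log (by positivity)).add_const b

theorem hasDerivAt_two_mul_log_one_add_exp_half (x : ℝ) :
    HasDerivAt (fun y ↦ 2 * log (1 + exp (y / 2))) (exp (x / 2) / (1 + exp (x / 2))) x := by
  have h := ((((hasDerivAt_id x).div_const 2).exp.const_add 1).log (by positivity)).const_mul 2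
  exact h.congr_deriv (by simp only [id]; ring)

theorem sq_lt_one_div_sq_of_mul_lt_one {A C : ℝ} (hA : 0 < A) (hC : 0 < C) (hAC : A * C < 1) :
    C ^ 2 < 1 / A ^ 2 := by
  rw [lt_div_iff₀ (by positivity), ← mul_pow]
  exact pow_lt_one₀ (by positivity) (by linarith) two_ne_zero

theorem hasDerivAt_Lbar_upper {A : ℝ} (hA : 0 < A) (x : ℝ) :
    HasDerivAt
      (fun y ↦ if ¬ 1 / A ^ 2 < exp y then 2 * log (1 + exp (y / 2))
        else log (1 + A * exp y) + log ((1 + A) / A))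
      (if ¬ 1 / A ^ 2 < exp x then exp (x / 2) / (1 + exp (x / 2))
        else A * exp x / (1 + A * exp x)) x := by
  set b := log (1 / A ^ 2)
  have hexp_b : exp b = (1 / A) ^ 2 := by rw [exp_log (by positivity), div_pow, one_pow]
  have hexp_b2 : exp (b / 2) = 1 / A := exp_half_eq_of_exp_eq_sq (by positivity) hexp_b
  refine hasDerivAt_ite_of_lt_of_gt (a := b) (fun y hy ↦ ?_) (fun y hy ↦ ?_)
    hasDerivAt_two_mul_log_one_add_exp_half (hasDerivAt_log_one_add_const_mul_exp hA _) ?_ ?_ x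
  · exact not_lt.mpr ((lt_log_iff_exp_lt (by positivity)).mp hy).le
  · exact not_not.mpr ((log_lt_iff_lt_exp (by positivity)).mp hy)
  · have h : 1 + A * (1 / A) ^ 2 = (1 + A) / A := by field_simp; ring
    rw [hexp_b2, hexp_b, h, one_add_div hA.ne', add_comm A 1]
    ring
  · rw [hexp_b2, hexp_b]
    field_simp

theorem hasDerivAt_Lbar {A C : ℝ} (hA : 0 < A) (hC : 0 < C) (hAC : A * C < 1) (l : ℝ) :
    HasDerivAt (Lbar A C)
      (if exp l < C ^ 2 then exp l / (C + exp l)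
       else if 1 / A ^ 2 < exp l then A * exp l / (1 + A * exp l)
       else exp (l / 2) / (1 + exp (l / 2))) l := by
  set a := log (C ^ 2)
  have hexp_a : exp a = C ^ 2 := exp_log (by positivity)
  have hexp_a2 : exp (a / 2) = C := exp_half_eq_of_exp_eq_sq hC hexp_a
  have hupper_at_a : ¬ 1 / A ^ 2 < exp a :=
    hexp_a ▸ not_lt.mpr (sq_lt_one_div_sq_of_mul_lt_one hA hC hAC).le
  have h := hasDerivAt_ite_of_lt_of_gt (a := a)
    (fun y hy ↦ (lt_log_iff_exp_lt (by positivity)).mp hy)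
    (fun y hy ↦ not_lt.mpr ((log_lt_iff_lt_exp (by positivity)).mp hy).le)
    (hasDerivAt_log_const_add_exp hC (log ((1 + C) / C))) (hasDerivAt_Lbar_upper hA) ?_ ?_ l
  · simp only [ite_not] at h
    exact h
  · rw [if_pos hupper_at_a, hexp_a, hexp_a2, show C + C ^ 2 = C * (1 + C) by ring,
      log_mul hC.ne' (by positivity), log_div (by positivity) hC.ne']
    ring
  · rw [if_pos hupper_at_a, hexp_a, hexp_a2]
    field_simp

/-- For `A, C > 0` with `AC < 1`, the piecewise function `Λ̄` is continuous and
differentiable on `ℝ`, with derivative given by the three indicated formulas on the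
corresponding regions. -/
theorem stmt_8 (A C : ℝ) (hA : 0 < A) (hC : 0 < C) (hAC : A * C < 1) :
    Continuous (Lbar A C) ∧ Differentiable ℝ (Lbar A C) ∧
    (∀ l : ℝ, Real.exp l < C ^ 2 →
      deriv (Lbar A C) l = Real.exp l / (C + Real.exp l)) ∧
    (∀ l : ℝ, C ^ 2 < Real.exp l → Real.exp l < 1 / A ^ 2 →
      deriv (Lbar A C) l = Real.exp (l / 2) / (1 + Real.exp (l / 2))) ∧
    (∀ l : ℝ, 1 / A ^ 2 < Real.exp l →
      deriv (Lbar A C) l = A * Real.exp l / (1 + A * Real.exp l)) := by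
  have hCA := sq_lt_one_div_sq_of_mul_lt_one hA hC hAC
  have hdiff : Differentiable ℝ (Lbar A C) := fun l ↦ (hasDerivAt_Lbar hA hC hAC l).differentiableAt
  refine ⟨hdiff.continuous, hdiff, fun l h ↦ ?_, fun l h₁ h₂ ↦ ?_, fun l h ↦ ?_⟩ <;>
    rw [(hasDerivAt_Lbar hA hC hAC l).deriv]
  · rw [if_pos h]
  · rw [if_neg (not_lt.mpr h₁.le), if_neg (not_lt.mpr h₂.le)]
  · rw [if_neg (not_lt.mpr (hCA.trans h).le), if_pos h]
end

section
/- For the semicircle density on [−2,2], one has ∫_{−2}^{2} (2 + x)^n · √(4 − x²)/(2π) dx = C_{n+1}, the (n+1)-st Catalan number C_{n+1} = (1/(n+2))·binom(2n+2, n+1), for every integer n ≥ 0. -/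
open Real intervalIntegral

/-! The substitution `x = y² - 2` turns the integral into `2 ∫₀² y^(2n+2) √(4 - y²) dy`, which by
evenness is the `(2n+2)`-nd moment `∫₋₂² y^(2n+2) √(4 - y²) dy` of the semicircle. Substituting
`y = 2 cos θ`, the `2m`-th moment becomes `4^(m+1) (W_{2m} - W_{2m+2})` for the Wallis integrals
`W_k = ∫₀^π cos^k θ dθ`, and `W_{2m} = π binom(2m, m) / 4^m` gives `2π C_m`. -/

theorem integral_cos_pow_even (m : ℕ) :
    ∫ x in (0 : ℝ)..π, cos x ^ (2 * m) = π * m.centralBinom / 4 ^ m := by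
  induction m with
  | zero => simp
  | succ k ih =>
    have hrec : ((k : ℝ) + 1) * (k + 1).centralBinom = 2 * (2 * k + 1) * k.centralBinom := by
      exact_mod_cast Nat.succ_mul_centralBinom_succ k
    rw [Nat.mul_succ, integral_cos_pow, ih, sin_zero, sin_pi]
    field_simp
    push_cast
    linear_combination (-2 * π * 4 ^ k) * hrec

theorem integral_neg_eq_two_nsmul_of_even {E : Type*} [NormedAddCommGroup E] [NormedSpace ℝ E]
    {f : ℝ → E} (hf : f.Even) {a : ℝ} (hint : IntervalIntegrable f MeasureTheory.volume 0 a) :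
    ∫ x in -a..a, f x = 2 • ∫ x in 0..a, f x := by
  have hleft : ∫ x in -a..0, f x = ∫ x in 0..a, f x := by
    simpa [hf.eq] using (integral_comp_neg (a := 0) (b := a) f).symm
  have hint' : IntervalIntegrable f MeasureTheory.volume (-a) 0 := by
    simpa [hf.eq] using ((IntervalIntegrable.iff_comp_neg).mp hint).symm
  rw [← integral_add_adjacent_intervals hint' hint, hleft, two_nsmul]

theorem integral_mul_sqrt_four_sub_sq_eq_integral_cos {g : ℝ → ℝ} (hg : Continuous g) :
    ∫ x in (-2 : ℝ)..2, g x * √(4 - x ^ 2) =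
      ∫ θ in (0 : ℝ)..π, g (2 * cos θ) * (4 * sin θ ^ 2) := by
  have hderiv : ∀ θ ∈ Set.uIcc 0 π, HasDerivAt (fun t => 2 * cos t) (-(2 * sin θ)) θ :=
    fun θ _ => by simpa using (hasDerivAt_cos θ).const_mul 2
  have hsubst := integral_comp_mul_deriv hderiv (by fun_prop)
    (g := fun x => g x * √(4 - x ^ 2)) (hg.mul (by fun_prop))
  rw [cos_zero, cos_pi, mul_one, mul_neg_one] at hsubst
  rw [integral_symm 2 (-2), ← hsubst, ← integral_neg]
  refine integral_congr fun θ hθ => ?_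
  rw [Set.uIcc_of_le pi_pos.le] at hθ
  have hsin : 0 ≤ sin θ := sin_nonneg_of_nonneg_of_le_pi hθ.1 hθ.2
  have hsqrt : √(4 - (2 * cos θ) ^ 2) = 2 * sin θ := by
    rw [← sqrt_sq (by positivity : 0 ≤ 2 * sin θ)]
    congr 1
    linear_combination -4 * sin_sq θ
  simp only [Function.comp_apply, hsqrt]
  ring

theorem integral_pow_two_mul_mul_sqrt_four_sub_sq (m : ℕ) :
    ∫ x in (-2 : ℝ)..2, x ^ (2 * m) * √(4 - x ^ 2) = 2 * π * catalan m := by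
  have hcos : ∀ k, IntervalIntegrable (fun θ => cos θ ^ k) MeasureTheory.volume 0 π :=
    fun k => (continuous_cos.pow k).intervalIntegrable 0 π
  have hcatalan : ((m : ℝ) + 1) * catalan m = m.centralBinom := by
    exact_mod_cast succ_mul_catalan_eq_centralBinom m
  have hrec : ((m : ℝ) + 1) * (m + 1).centralBinom = 2 * (2 * m + 1) * m.centralBinom := by
    exact_mod_cast Nat.succ_mul_centralBinom_succ m
  calc ∫ x in (-2 : ℝ)..2, x ^ (2 * m) * √(4 - x ^ 2)
      = ∫ θ in (0 : ℝ)..π, 4 ^ (m + 1) * (cos θ ^ (2 * m) - cos θ ^ (2 * (m + 1))) := by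
        rw [integral_mul_sqrt_four_sub_sq_eq_integral_cos (continuous_pow _)]
        refine integral_congr fun θ _ => ?_
        simp only [mul_pow, pow_mul, sin_sq]
        ring
    _ = 2 * π * catalan m := by
        rw [integral_const_mul, integral_sub (hcos _) (hcos _), integral_cos_pow_even,
          integral_cos_pow_even, pow_succ]
        field_simp
        refine mul_left_cancel₀ (by positivity : (m : ℝ) + 1 ≠ 0) ?_
        linear_combination -hrec - 2 * hcatalan

theorem integral_two_add_pow_mul_sqrt_four_sub_sq (n : ℕ) :
    ∫ x in (-2 : ℝ)..2, (2 + x) ^ n * √(4 - x ^ 2) =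
      2 * ∫ y in (0 : ℝ)..2, y ^ (2 * (n + 1)) * √(4 - y ^ 2) := by
  have hderiv : ∀ y ∈ Set.uIcc (0 : ℝ) 2, HasDerivAt (fun t => t ^ 2 - 2) (2 * y) y :=
    fun y _ => by simpa using (hasDerivAt_pow 2 y).sub_const 2
  have hsubst := integral_comp_mul_deriv hderiv (by fun_prop)
    (g := fun x => (2 + x) ^ n * √(4 - x ^ 2)) (by fun_prop)
  norm_num at hsubst
  rw [← hsubst, ← integral_const_mul]
  refine integral_congr fun y hy => ?_
  rw [Set.uIcc_of_le zero_le_two] at hy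
  have hsqrt : √(4 - (y ^ 2 - 2) ^ 2) = y * √(4 - y ^ 2) := by
    rw [show 4 - (y ^ 2 - 2) ^ 2 = y ^ 2 * (4 - y ^ 2) by ring, sqrt_mul (sq_nonneg y),
      sqrt_sq hy.1]
  simp only [hsqrt, pow_mul]
  ring

/-- For the semicircle density on `[−2,2]`,
`∫_{−2}^{2} (2 + x)^n √(4 − x²)/(2π) dx = C_{n+1}`, the `(n+1)`-st Catalan number. -/
theorem stmt_10 (n : ℕ) :
    ∫ x in (-2 : ℝ)..2, (2 + x) ^ n * Real.sqrt (4 - x ^ 2) / (2 * π)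
      = (catalan (n + 1) : ℝ) := by
  have heven : Function.Even fun x : ℝ => x ^ (2 * (n + 1)) * √(4 - x ^ 2) :=
    fun x => by simp only [pow_mul, neg_sq]
  have hint : IntervalIntegrable (fun x : ℝ => x ^ (2 * (n + 1)) * √(4 - x ^ 2))
      MeasureTheory.volume 0 2 := by
    apply Continuous.intervalIntegrable; fun_prop
  rw [integral_div, integral_two_add_pow_mul_sqrt_four_sub_sq, two_mul, ← two_nsmul,
    ← integral_neg_eq_two_nsmul_of_even heven hint, integral_pow_two_mul_mul_sqrt_four_sub_sq]
  field_simp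
end

section
/- For every integer m ≥ 0, ∫_{−2}^{2} y^{2m} √(4 − y²)/(2π) dy = C_m, the m-th Catalan number, and all odd moments of the semicircle density on [−2,2] vanish. -/
/-!
Write `M_r(k) = ∫_{-r}^{r} y^k √(r² - y²) dy`. Integrating `y^{k+1} · y √(r² - y²)` by
parts against the antiderivative `-(r² - y²)^{3/2}/3`, whose boundary values vanish, gives
`(k + 4) M_r(k + 2) = (k + 1) r² M_r(k)`. For `r = 2` and `k = 2m` this is the recurrence
`(m + 2) C_{m+1} = 2(2m + 1) C_m` of the Catalan numbers, and `M_2(0) = 2π` is the area of a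
half-disc. Odd moments vanish because the integrand is odd.
-/

open Real intervalIntegral

theorem integral_neg_self_eq_zero_of_odd {E : Type*} [NormedAddCommGroup E] [NormedSpace ℝ E]
    {f : ℝ → E} (hf : f.Odd) (a : ℝ) : ∫ x in -a..a, f x = 0 := by
  have h := integral_comp_neg (a := -a) (b := a) f
  simp only [hf _, integral_neg, neg_neg] at h
  have h2 : (2 : ℝ) • ∫ x in -a..a, f x = 0 := by
    rw [two_smul]
    nth_rewrite 1 [← h]
    exact neg_add_cancel _
  exact (smul_eq_zero.mp h2).resolve_left two_ne_zero

theorem add_two_mul_catalan_succ (n : ℕ) :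
    (n + 2) * catalan (n + 1) = 2 * (2 * n + 1) * catalan n := by
  apply Nat.eq_of_mul_eq_mul_left n.succ_pos
  calc (n + 1) * ((n + 2) * catalan (n + 1))
      = (n + 1) * ((n + 1 + 1) * catalan (n + 1)) := rfl
    _ = (n + 1) * (n + 1).centralBinom := by rw [succ_mul_catalan_eq_centralBinom]
    _ = 2 * (2 * n + 1) * ((n + 1) * catalan n) := by
      rw [Nat.succ_mul_centralBinom_succ, succ_mul_catalan_eq_centralBinom]
    _ = (n + 1) * (2 * (2 * n + 1) * catalan n) := by ring

noncomputable def semicircleMoment (r : ℝ) (k : ℕ) : ℝ :=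
  ∫ y in -r..r, y ^ k * √(r ^ 2 - y ^ 2)

theorem hasDerivAt_sub_sq_mul_sqrt_sub_sq {r x : ℝ} (hx : x ^ 2 < r ^ 2) :
    HasDerivAt (fun y => (r ^ 2 - y ^ 2) * √(r ^ 2 - y ^ 2)) (-3 * x * √(r ^ 2 - x ^ 2)) x := by
  have hpos : 0 < r ^ 2 - x ^ 2 := sub_pos.mpr hx
  have hsub : HasDerivAt (fun y => r ^ 2 - y ^ 2) (-(2 * x)) x := by
    simpa using (hasDerivAt_pow 2 x).const_sub (r ^ 2)
  refine (hsub.mul (hsub.sqrt hpos.ne')).congr_deriv ?_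
  have hs : √(r ^ 2 - x ^ 2) ≠ 0 := (sqrt_pos.mpr hpos).ne'
  field_simp
  rw [sq_sqrt hpos.le]
  ring

theorem semicircleMoment_add_two (r : ℝ) (k : ℕ) :
    (k + 4) * semicircleMoment r (k + 2) = (k + 1) * r ^ 2 * semicircleMoment r k := by
  have hint : ∀ j : ℕ,
      IntervalIntegrable (fun y : ℝ => y ^ j * √(r ^ 2 - y ^ 2)) MeasureTheory.volume (-r) r :=
    fun j => (by fun_prop : Continuous _).intervalIntegrable _ _
  have hv : ∀ x ∈ Set.Ioo (min (-r) r) (max (-r) r), HasDerivAt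
      (fun y => -((r ^ 2 - y ^ 2) * √(r ^ 2 - y ^ 2)) / 3) (x * √(r ^ 2 - x ^ 2)) x := by
    rintro x ⟨hl, hr⟩
    rw [min_lt_iff] at hl
    rw [lt_max_iff] at hr
    have hx : x ^ 2 < r ^ 2 := by rcases hl with hl | hl <;> rcases hr with hr | hr <;> nlinarith
    exact ((hasDerivAt_sub_sq_mul_sqrt_sub_sq hx).neg.div_const 3).congr_deriv (by ring)
  have hparts := integral_mul_deriv_eq_deriv_mul_of_hasDerivAt
    (u' := fun y => ((k + 1 : ℕ) : ℝ) * y ^ k) (by fun_prop) (by fun_prop)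
    (fun x _ => hasDerivAt_pow (k + 1) x) hv
    ((by fun_prop : Continuous fun y : ℝ => ((k + 1 : ℕ) : ℝ) * y ^ k).intervalIntegrable _ _)
    (by simpa using hint 1)
  have hlhs : (fun x => x ^ (k + 1) * (x * √(r ^ 2 - x ^ 2))) =
      fun x => x ^ (k + 2) * √(r ^ 2 - x ^ 2) := by
    funext x; ring
  have hrhs :
      (fun x => ((k + 1 : ℕ) : ℝ) * x ^ k * (-((r ^ 2 - x ^ 2) * √(r ^ 2 - x ^ 2)) / 3)) =
      fun x => -((k + 1) / 3 : ℝ) *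
        (r ^ 2 * (x ^ k * √(r ^ 2 - x ^ 2)) - x ^ (k + 2) * √(r ^ 2 - x ^ 2)) := by
    funext x; push_cast; ring
  simp only [sub_self, zero_mul, mul_zero, neg_zero, zero_div, neg_sq] at hparts
  rw [hlhs, hrhs, integral_const_mul, integral_sub ((hint k).const_mul _) (hint (k + 2)),
    integral_const_mul] at hparts
  rw [semicircleMoment, semicircleMoment]
  linear_combination 3 * hparts

theorem semicircleMoment_zero {r : ℝ} (hr : 0 ≤ r) : semicircleMoment r 0 = π * r ^ 2 / 2 := by
  rcases hr.eq_or_lt with rfl | hr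
  · simp [semicircleMoment]
  have hscale : ∀ x : ℝ, √(r ^ 2 - (r * x) ^ 2) = r * √(1 - x ^ 2) := fun x => by
    rw [show r ^ 2 - (r * x) ^ 2 = r ^ 2 * (1 - x ^ 2) by ring, sqrt_mul (by positivity),
      sqrt_sq hr.le]
  have h := integral_comp_mul_left (a := -1) (b := 1) (fun y => √(r ^ 2 - y ^ 2)) hr.ne'
  simp only [hscale, integral_const_mul, integral_sqrt_one_sub_sq, mul_neg, mul_one,
    smul_eq_mul] at h
  rw [semicircleMoment]
  field_simp at h ⊢
  simpa [mul_comm] using h.symm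

theorem semicircleMoment_two_two_mul (m : ℕ) :
    semicircleMoment 2 (2 * m) = 2 * π * catalan m := by
  induction m with
  | zero => norm_num [semicircleMoment_zero]; ring
  | succ m ih =>
    have hrec := semicircleMoment_add_two 2 (2 * m)
    have hcat :
        ((m + 2 : ℕ) : ℝ) * catalan (m + 1) = ((2 * (2 * m + 1) : ℕ) : ℝ) * catalan m := by
      exact_mod_cast add_two_mul_catalan_succ m
    push_cast at hrec hcat
    apply mul_left_cancel₀ (by positivity : (2 * m + 4 : ℝ) ≠ 0)
    rw [show 2 * (m + 1) = 2 * m + 2 by ring]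
    linear_combination hrec + 4 * (2 * m + 1) * ih - 4 * π * hcat

/-- The even moments of the semicircle density on `[−2,2]` are the Catalan
numbers, `∫_{−2}^{2} y^{2m} √(4 − y²)/(2π) dy = C_m`, and all odd moments vanish. -/
theorem stmt_11 (m : ℕ) :
    (∫ y in (-2 : ℝ)..2, y ^ (2 * m) * Real.sqrt (4 - y ^ 2) / (2 * π)
        = (catalan m : ℝ)) ∧
    (∫ y in (-2 : ℝ)..2, y ^ (2 * m + 1) * Real.sqrt (4 - y ^ 2) / (2 * π) = 0) := by
  refine ⟨?_, integral_neg_self_eq_zero_of_odd (fun y => ?_) 2⟩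
  · have hmoment :
        ∫ y in (-2 : ℝ)..2, y ^ (2 * m) * √(4 - y ^ 2) = semicircleMoment 2 (2 * m) := by
      norm_num [semicircleMoment]
    rw [integral_div, hmoment, semicircleMoment_two_two_mul]
    field_simp
  · rw [(odd_two_mul_add_one m).neg_pow, neg_sq]
    ring
end

section
/- Let q ∈ (−1,1), η, θ ∈ ℝ and let M_n(x;t) be the monic polynomials defined by M_{−1}=0, M_0=1 and x·M_n(x;t) = M_{n+1}(x;t) + (θ + tη)[n]_q M_n(x;t) + t(1 + ηθ[n−1]_q)[n]_q M_{n−1}(x;t), where [n]_q = 1 + q + … + q^{n−1}. Then for each n, M_n(x;t) is a polynomial in both x and t, of degree n in x, and the operator H defined on this basis by H(M_n(·;t))(x) = η[n]_q M_n(x;t) + (1 + ηθ[n−1]_q)[n]_q M_{n−1}(x;t) satisfies H(p)(x) = A(xp)(x) − x A(p)(x) for every polynomial p, where A is the linear operator defined on this basis by A(M_n(·;t)) = −∂M_n/∂t. -/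
noncomputable def qint (q : ℝ) (n : ℕ) : ℝ := ∑ i ∈ Finset.range n, q ^ i

noncomputable def Mpoly (q η θ : ℝ) : ℕ → ℝ → ℝ → ℝ
  | 0 => fun _ _ => 1
  | 1 => fun _ x => x
  | (n + 2) => fun t x =>
      (x - (θ + t * η) * qint q (n + 1)) * Mpoly q η θ (n + 1) t x
        - t * (1 + η * θ * qint q n) * qint q (n + 1) * Mpoly q η θ n t x

lemma mrec (q η θ : ℝ) (n : ℕ) (t x : ℝ) :
    Mpoly q η θ (n+1) t x = (x - (θ + t*η) * qint q n) * Mpoly q η θ n t x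
      - t * (1 + η * θ * qint q (n-1)) * qint q n * Mpoly q η θ (n-1) t x := by
  cases n with
  | zero => simp [Mpoly, qint]
  | succ m => rfl

lemma mdiff (q η θ x : ℝ) : ∀ n, Differentiable ℝ (fun s => Mpoly q η θ n s x) := by
  have key : ∀ n, Differentiable ℝ (fun s => Mpoly q η θ n s x) ∧
      Differentiable ℝ (fun s => Mpoly q η θ (n+1) s x) := by
    intro n
    induction n with
    | zero =>
      constructor
      · simp only [Mpoly]; fun_prop
      · simp only [Mpoly]; fun_prop
    | succ m ih =>
      refine ⟨ih.2, ?_⟩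
      have h1 := ih.1
      have h2 := ih.2
      show Differentiable ℝ (fun s => Mpoly q η θ (m+2) s x)
      simp only [Mpoly]
      fun_prop
  exact fun n => (key n).1

lemma mderiv (q η θ : ℝ) (n : ℕ) (t x : ℝ) :
    deriv (fun s => Mpoly q η θ (n+1) s x) t =
      (x - (θ + t*η) * qint q n) * deriv (fun s => Mpoly q η θ n s x) t
      - η * qint q n * Mpoly q η θ n t x
      - (1 + η*θ*qint q (n-1)) * qint q n * Mpoly q η θ (n-1) t x
      - t * (1 + η*θ*qint q (n-1)) * qint q n
          * deriv (fun s => Mpoly q η θ (n-1) s x) t := by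
  have h1 : HasDerivAt (fun s => Mpoly q η θ n s x)
      (deriv (fun s => Mpoly q η θ n s x) t) t :=
    ((mdiff q η θ x n) t).hasDerivAt
  have h0 : HasDerivAt (fun s => Mpoly q η θ (n-1) s x)
      (deriv (fun s => Mpoly q η θ (n-1) s x) t) t :=
    ((mdiff q η θ x (n-1)) t).hasDerivAt
  have hA : HasDerivAt (fun s : ℝ => x - (θ + s*η) * qint q n) (-(η * qint q n)) t := by
    have h := (((hasDerivAt_id t).mul_const η).const_add θ).mul_const (qint q n)
    exact ((hasDerivAt_const t x).sub h).congr_deriv (by ring)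
  have hB : HasDerivAt (fun s : ℝ => s * (1 + η*θ*qint q (n-1)) * qint q n)
      ((1 + η*θ*qint q (n-1)) * qint q n) t := by
    simpa using ((hasDerivAt_id t).mul_const (1 + η*θ*qint q (n-1))).mul_const (qint q n)
  have hkey := (hA.mul h1).sub (hB.mul h0)
  have hfun : (fun s => Mpoly q η θ (n+1) s x)
      = fun s => (x - (θ + s*η) * qint q n) * Mpoly q η θ n s x
        - s * (1 + η*θ*qint q (n-1)) * qint q n * Mpoly q η θ (n-1) s x :=
    funext fun s => mrec q η θ n s x
  rw [hfun]; refine hkey.deriv.trans ?_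
  ring

noncomputable def Ppoly (q η θ t : ℝ) : ℕ → Polynomial ℝ
  | 0 => 1
  | 1 => Polynomial.X
  | (n+2) => (Polynomial.X - Polynomial.C ((θ + t*η) * qint q (n+1))) * Ppoly q η θ t (n+1)
      - Polynomial.C (t * (1 + η*θ*qint q n) * qint q (n+1)) * Ppoly q η θ t n

lemma Ppoly_spec (q η θ t : ℝ) : ∀ n, (Ppoly q η θ t n).Monic ∧
    (Ppoly q η θ t n).natDegree = n ∧
    ∀ x, Mpoly q η θ n t x = (Ppoly q η θ t n).eval x := by
  have key : ∀ n, ((Ppoly q η θ t n).Monic ∧ (Ppoly q η θ t n).natDegree = n ∧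
      ∀ x, Mpoly q η θ n t x = (Ppoly q η θ t n).eval x) ∧
      ((Ppoly q η θ t (n+1)).Monic ∧ (Ppoly q η θ t (n+1)).natDegree = n+1 ∧
      ∀ x, Mpoly q η θ (n+1) t x = (Ppoly q η θ t (n+1)).eval x) := by
    intro n
    induction n with
    | zero =>
      refine ⟨⟨?_, ?_, ?_⟩, ?_, ?_, ?_⟩ <;> simp [Ppoly, Mpoly, Polynomial.monic_X]
    | succ m ih =>
      obtain ⟨⟨hm0, hd0, he0⟩, hm1, hd1, he1⟩ := ih
      refine ⟨⟨hm1, hd1, he1⟩, ?_, ?_, ?_⟩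
      · have hlt : (Polynomial.C (t * (1 + η*θ*qint q m) * qint q (m+1))
              * Ppoly q η θ t m).natDegree
            < ((Polynomial.X - Polynomial.C ((θ + t*η) * qint q (m+1)))
              * Ppoly q η θ t (m+1)).natDegree := by
          rw [Polynomial.natDegree_mul (Polynomial.X_sub_C_ne_zero _) hm1.ne_zero,
              Polynomial.natDegree_X_sub_C, hd1]
          calc _ ≤ (Ppoly q η θ t m).natDegree := Polynomial.natDegree_C_mul_le _ _
            _ < _ := by omega
        show (Ppoly q η θ t (m+2)).Monic
        exact ((Polynomial.monic_X_sub_C _).mul hm1).sub_of_left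
          (Polynomial.degree_lt_degree hlt)
      · have hlt : (Polynomial.C (t * (1 + η*θ*qint q m) * qint q (m+1))
              * Ppoly q η θ t m).natDegree
            < ((Polynomial.X - Polynomial.C ((θ + t*η) * qint q (m+1)))
              * Ppoly q η θ t (m+1)).natDegree := by
          rw [Polynomial.natDegree_mul (Polynomial.X_sub_C_ne_zero _) hm1.ne_zero,
              Polynomial.natDegree_X_sub_C, hd1]
          calc _ ≤ (Ppoly q η θ t m).natDegree := Polynomial.natDegree_C_mul_le _ _
            _ < _ := by omega
        have hun : Ppoly q η θ t (m+2)
            = (Polynomial.X - Polynomial.C ((θ + t*η) * qint q (m+1))) * Ppoly q η θ t (m+1)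
              - Polynomial.C (t * (1 + η*θ*qint q m) * qint q (m+1)) * Ppoly q η θ t m := rfl
        show (Ppoly q η θ t (m+2)).natDegree = m+2
        rw [hun, Polynomial.natDegree_sub_eq_left_of_natDegree_lt hlt,
            Polynomial.natDegree_mul (Polynomial.X_sub_C_ne_zero _) hm1.ne_zero,
            Polynomial.natDegree_X_sub_C, hd1]
        omega
      · intro x
        show Mpoly q η θ (m+2) t x = _
        simp [Mpoly, Ppoly, ← he0, ← he1]
  exact fun n => (key n).1

noncomputable def Qpoly (q η θ x : ℝ) : ℕ → Polynomial ℝ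
  | 0 => 1
  | 1 => Polynomial.C x
  | (n+2) => (Polynomial.C x - (Polynomial.C θ + Polynomial.X * Polynomial.C η)
        * Polynomial.C (qint q (n+1))) * Qpoly q η θ x (n+1)
      - Polynomial.X * Polynomial.C ((1 + η*θ*qint q n) * qint q (n+1)) * Qpoly q η θ x n

lemma Qpoly_spec (q η θ x : ℝ) : ∀ n, ∀ t, Mpoly q η θ n t x = (Qpoly q η θ x n).eval t := by
  have key : ∀ n, (∀ t, Mpoly q η θ n t x = (Qpoly q η θ x n).eval t) ∧
      (∀ t, Mpoly q η θ (n+1) t x = (Qpoly q η θ x (n+1)).eval t) := by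
    intro n
    induction n with
    | zero => constructor <;> intro t <;> simp [Mpoly, Qpoly]
    | succ m ih =>
      refine ⟨ih.2, fun t => ?_⟩
      show Mpoly q η θ (m+2) t x = _
      simp only [Mpoly, Qpoly, Polynomial.eval_sub, Polynomial.eval_mul, Polynomial.eval_add,
        Polynomial.eval_C, Polynomial.eval_X, ← ih.1, ← ih.2]
      ring
  exact fun n => (key n).1

/-- Each `M_n(x;t)` is a polynomial in `x` (of degree `n`) and in `t`, and the
operator `H(p) = A(x·p) − x·A(p)`, where `A` acts on the basis by
`A(M_n(·;t)) = −∂M_n/∂t` (coefficients in the basis expansion are not differentiated),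
satisfies `H(M_n(·;t))(x) = η[n]_q M_n(x;t) + (1 + ηθ[n−1]_q)[n]_q M_{n−1}(x;t)`. -/
theorem stmt_18 (q η θ : ℝ) (hq1 : -1 < q) (hq2 : q < 1) :
    (∀ (n : ℕ) (t : ℝ), ∃ P : Polynomial ℝ, P.natDegree = n ∧
      ∀ x : ℝ, Mpoly q η θ n t x = P.eval x) ∧
    (∀ (n : ℕ) (x : ℝ), ∃ Q : Polynomial ℝ,
      ∀ t : ℝ, Mpoly q η θ n t x = Q.eval t) ∧
    (∀ (n : ℕ) (t x : ℝ),
      -(deriv (fun s => Mpoly q η θ (n + 1) s x) t)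
        - (θ + t * η) * qint q n * deriv (fun s => Mpoly q η θ n s x) t
        - t * (1 + η * θ * qint q (n - 1)) * qint q n *
            deriv (fun s => Mpoly q η θ (n - 1) s x) t
        + x * deriv (fun s => Mpoly q η θ n s x) t
      = η * qint q n * Mpoly q η θ n t x
        + (1 + η * θ * qint q (n - 1)) * qint q n * Mpoly q η θ (n - 1) t x) := by
  refine ⟨fun n t => ⟨Ppoly q η θ t n, (Ppoly_spec q η θ t n).2.1, (Ppoly_spec q η θ t n).2.2⟩,
    fun n x => ⟨Qpoly q η θ x n, Qpoly_spec q η θ x n⟩, fun n t x => ?_⟩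
  rw [mderiv q η θ n t x]
  ring
end
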